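/- arXiv:1511.00224 — 3 statements merged into one kernel-verified Lean document; each statement's English description precedes it below -/
import Mathlib

section
/- For every probability distribution p = (p_k) on ℕ with p_k > 0 for all k, every real γ₁ > 0 and every s ∈ {2,3,4}, the operator B_s = Σ_{k=0}^{s−1} γ₁^{s−1−k} A^k is injective on its domain: if v ∈ D(A^{s−1}) ⊆ ℂ^ℕ and B_s v = 0, then v = 0. -/
open scoped BigOperators

noncomputable section

/-- Tail sum `q_l = Σ_{k ≥ l} p_k`. -/
def qtail (p : ℕ → ℝ) (l : ℕ) : ℝ := ∑' k, p (l + k)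

/-- The operator `A` on complex sequences: `(A v)(l) = (1/q_l) Σ_{k=l}^∞ p_k v(k)`. -/
def opA (p : ℕ → ℝ) (v : ℕ → ℂ) : ℕ → ℂ :=
  fun l => (1 / (qtail p l : ℂ)) * ∑' k, (p (l + k) : ℂ) * v (l + k)

/-- Membership in the domain `D(A) = {v : Σ_k p_k |v(k)| < ∞}`. -/
def memDA (p : ℕ → ℝ) (v : ℕ → ℂ) : Prop :=
  Summable fun k => p k * ‖v k‖

/-- Membership in the domain `D(A^m) = {v : A^k v ∈ D(A) for k = 0,…,m-1}`. -/
def memDAiter (p : ℕ → ℝ) (m : ℕ) (v : ℕ → ℂ) : Prop :=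
  ∀ k < m, memDA p ((opA p)^[k] v)

/-- The operator `B_s = Σ_{k=0}^{s-1} γ₁^{s-1-k} A^k`. -/
def opB (p : ℕ → ℝ) (γ₁ : ℝ) (s : ℕ) (v : ℕ → ℂ) : ℕ → ℂ :=
  fun l => ∑ k ∈ Finset.range s, (γ₁ : ℂ) ^ (s - 1 - k) * ((opA p)^[k] v) l

/-! Writing `S l = Σ_{k ≥ l} p_k v(k)`, an eigenvector `A v = λ v` satisfies `S l = λ q_l v(l)`
and `S (l+1) = S l - p_l v(l) = (λ q_l - p_l) v(l)`. When `Re λ ≤ 0` subtracting the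
nonnegative real `p_l` cannot decrease the modulus, so `‖S l‖` is nondecreasing; as a tail of
a convergent series it tends to `0`, hence `S ≡ 0` and `v = 0`. For `s ≤ 4` every root of
`Σ_{k<s} γ₁^{s-1-k} x^k`, namely `γ₁ ζ` with `ζ ≠ 1` an `s`-th root of unity, has
nonpositive real part, so `B_s v = 0` is peeled off one linear factor `A - λ` at a time. -/

lemma Complex.norm_mul_le_norm_mul_sub {z : ℂ} (hz : z.re ≤ 0) {a b : ℝ} (ha : 0 ≤ a)
    (hb : 0 ≤ b) : ‖z‖ * a ≤ ‖z * a - b‖ := by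
  have hsq : (‖z‖ * a) ^ 2 ≤ ‖z * a - b‖ ^ 2 := by
    rw [mul_pow, Complex.sq_norm, Complex.sq_norm, Complex.normSq_apply, Complex.normSq_apply]
    simp only [Complex.sub_re, Complex.sub_im, Complex.mul_re, Complex.mul_im,
      Complex.ofReal_re, Complex.ofReal_im, mul_zero, sub_zero]
    nlinarith [mul_nonneg (mul_nonneg (neg_nonneg.2 hz) ha) hb]
  exact pow_le_pow_iff_left₀ (by positivity) (norm_nonneg _) two_ne_zero |>.1 hsq

section

variable {p : ℕ → ℝ} {γ₁ : ℝ}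

lemma qtail_pos (hp : ∀ k, 0 < p k) (hsum : Summable p) (l : ℕ) : 0 < qtail p l := by
  have h : Summable fun k => p (l + k) := by
    simpa only [add_comm] using (summable_nat_add_iff l).2 hsum
  exact h.tsum_pos (fun k => (hp _).le) 0 (hp _)

lemma memDA.summable_shift (hp : ∀ k, 0 ≤ p k) {v : ℕ → ℂ} (hv : memDA p v) (l : ℕ) :
    Summable fun k => (p (l + k) : ℂ) * v (l + k) := by
  refine Summable.of_norm ?_
  simp only [norm_mul, Complex.norm_of_nonneg (hp _)]
  simpa only [add_comm] using (summable_nat_add_iff l).2 hv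

lemma memDA.add (hp : ∀ k, 0 ≤ p k) {f g : ℕ → ℂ} (hf : memDA p f) (hg : memDA p g) :
    memDA p (f + g) :=
  Summable.of_nonneg_of_le (fun k => mul_nonneg (hp k) (norm_nonneg _))
    (fun k => (mul_le_mul_of_nonneg_left (norm_add_le (f k) (g k)) (hp k)).trans_eq
      (mul_add _ _ _))
    (Summable.add hf hg)

lemma memDA.const_smul {v : ℕ → ℂ} (hv : memDA p v) (c : ℂ) : memDA p (c • v) := by
  refine (hv.mul_left ‖c‖).congr fun k => ?_
  simp only [Pi.smul_apply, smul_eq_mul, norm_mul]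
  ring

lemma opA_add (hp : ∀ k, 0 ≤ p k) {f g : ℕ → ℂ} (hf : memDA p f) (hg : memDA p g) :
    opA p (f + g) = opA p f + opA p g := by
  funext l
  simp only [opA, Pi.add_apply, mul_add, (hf.summable_shift hp l).tsum_add
    (hg.summable_shift hp l)]

lemma opA_const_smul (c : ℂ) (v : ℕ → ℂ) : opA p (c • v) = c • opA p v := by
  funext l
  simp only [opA, Pi.smul_apply, smul_eq_mul, mul_left_comm _ c, tsum_mul_left]

lemma memDA.tsum_shift_eq_add (hp : ∀ k, 0 ≤ p k) {v : ℕ → ℂ} (hv : memDA p v) (l : ℕ) :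
    ∑' k, (p (l + k) : ℂ) * v (l + k)
      = p l * v l + ∑' k, (p (l + 1 + k) : ℂ) * v (l + 1 + k) := by
  rw [(hv.summable_shift hp l).tsum_eq_zero_add]
  simp only [add_zero, add_right_comm l 1, add_assoc]

theorem eq_zero_of_opA_eq_smul (hp : ∀ k, 0 < p k) (hsum : Summable p) {lam : ℂ}
    (hlam : lam ≠ 0) (hre : lam.re ≤ 0) {v : ℕ → ℂ} (hv : memDA p v)
    (heig : opA p v = lam • v) : v = 0 := by
  set S : ℕ → ℂ := fun l => ∑' k, (p (l + k) : ℂ) * v (l + k)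
  have hq : ∀ l, 0 < qtail p l := qtail_pos hp hsum
  have hqC (l : ℕ) : (qtail p l : ℂ) ≠ 0 := Complex.ofReal_ne_zero.2 (hq l).ne'
  have hS (l : ℕ) : S l = lam * qtail p l * v l := by
    have h := congrFun heig l
    simp only [opA, Pi.smul_apply, smul_eq_mul, one_div] at h
    rw [inv_mul_eq_iff_eq_mul₀ (hqC l)] at h
    simp only [S, h]
    ring
  have hstep (l : ℕ) : S (l + 1) = (lam * qtail p l - p l) * v l := by
    have h : S l = p l * v l + S (l + 1) := hv.tsum_shift_eq_add (fun k => (hp k).le) l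
    linear_combination hS l - h
  have hmono : Monotone fun l => ‖S l‖ := by
    refine monotone_nat_of_le_succ fun l => ?_
    simp only [hstep, hS, norm_mul, Complex.norm_real, Real.norm_of_nonneg (hq l).le]
    exact mul_le_mul_of_nonneg_right
      (Complex.norm_mul_le_norm_mul_sub hre (hq l).le (hp l).le) (norm_nonneg _)
  have hlim : Filter.Tendsto (fun l => ‖S l‖) Filter.atTop (nhds 0) := by
    have h := tendsto_sum_nat_add fun k => (p k : ℂ) * v k
    simpa only [S, add_comm _ (_ : ℕ), norm_zero] using h.norm
  funext l
  have hSl : S l = 0 := norm_le_zero_iff.1 (hmono.ge_of_tendsto hlim l)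
  rw [hS l] at hSl
  simpa [hlam, hqC l] using hSl

theorem eq_zero_of_opA_opA_eq (hp : ∀ k, 0 < p k) (hsum : Summable p) {lam mu : ℂ}
    (hlam : lam ≠ 0) (hlam_re : lam.re ≤ 0) (hmu : mu ≠ 0) (hmu_re : mu.re ≤ 0)
    {v : ℕ → ℂ} (hv : memDA p v) (hAv : memDA p (opA p v))
    (h : opA p (opA p v) = (lam + mu) • opA p v - (lam * mu) • v) : v = 0 := by
  have hp0 (k : ℕ) : 0 ≤ p k := (hp k).le
  have hw : opA p v + (-mu) • v = 0 := by
    refine eq_zero_of_opA_eq_smul hp hsum hlam hlam_re (hAv.add hp0 (hv.const_smul _)) ?_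
    rw [opA_add hp0 hAv (hv.const_smul _), opA_const_smul, h]
    module
  refine eq_zero_of_opA_eq_smul hp hsum hmu hmu_re hv ?_
  rw [← sub_eq_zero, ← hw]
  module

lemma opB_two (v : ℕ → ℂ) : opB p γ₁ 2 v = opA p v + (γ₁ : ℂ) • v := by
  funext l
  simp only [opB, Finset.sum_range_succ, Finset.sum_range_zero, Function.iterate_succ_apply',
    Function.iterate_zero_apply, Pi.add_apply, Pi.smul_apply, smul_eq_mul]
  ring

lemma opB_three (v : ℕ → ℂ) :
    opB p γ₁ 3 v = opA p (opA p v) + (γ₁ : ℂ) • opA p v + (γ₁ : ℂ) ^ 2 • v := by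
  funext l
  simp only [opB, Finset.sum_range_succ, Finset.sum_range_zero, Function.iterate_succ_apply',
    Function.iterate_zero_apply, Pi.add_apply, Pi.smul_apply, smul_eq_mul]
  ring

lemma opB_four (v : ℕ → ℂ) :
    opB p γ₁ 4 v = opA p (opA p (opA p v)) + (γ₁ : ℂ) • opA p (opA p v)
      + (γ₁ : ℂ) ^ 2 • opA p v + (γ₁ : ℂ) ^ 3 • v := by
  funext l
  simp only [opB, Finset.sum_range_succ, Finset.sum_range_zero, Function.iterate_succ_apply',
    Function.iterate_zero_apply, Pi.add_apply, Pi.smul_apply, smul_eq_mul]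
  ring

theorem eq_zero_of_opB_two_eq_zero (hp : ∀ k, 0 < p k) (hsum : Summable p) (hγ₁ : 0 < γ₁)
    {v : ℕ → ℂ} (hv : memDA p v) (hBv : opB p γ₁ 2 v = 0) : v = 0 := by
  refine eq_zero_of_opA_eq_smul (lam := -γ₁) hp hsum (by simpa using hγ₁.ne')
    (by simpa using hγ₁.le) hv ?_
  rw [opB_two, add_eq_zero_iff_eq_neg] at hBv
  rw [hBv, neg_smul]

theorem eq_zero_of_opB_three_eq_zero (hp : ∀ k, 0 < p k) (hsum : Summable p) (hγ₁ : 0 < γ₁)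
    {v : ℕ → ℂ} (hv : memDA p v) (hAv : memDA p (opA p v)) (hBv : opB p γ₁ 3 v = 0) :
    v = 0 := by
  -- `γ₁ ω` and `γ₁ ω̄` for the primitive cube root of unity `ω = (-1 + i √3) / 2`
  set lam : ℂ := ⟨-γ₁ / 2, γ₁ * √3 / 2⟩
  set mu : ℂ := ⟨-γ₁ / 2, -(γ₁ * √3) / 2⟩
  have hsqrt3 : √3 ^ 2 = 3 := Real.sq_sqrt (by norm_num)
  have hsum_roots : lam + mu = -γ₁ := by
    apply Complex.ext <;>
      simp only [lam, mu, Complex.add_re, Complex.add_im, Complex.neg_re, Complex.neg_im,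
        Complex.ofReal_re, Complex.ofReal_im] <;> ring
  have hprod_roots : lam * mu = (γ₁ : ℂ) ^ 2 := by
    apply Complex.ext <;>
      simp only [lam, mu, pow_two, Complex.mul_re, Complex.mul_im, Complex.ofReal_re,
        Complex.ofReal_im]
    · linear_combination (γ₁ ^ 2 / 4) * hsqrt3
    · ring
  have hre_neg : -γ₁ / 2 < 0 := by linarith
  have hlam : lam ≠ 0 := fun h => hre_neg.ne (congrArg Complex.re h)
  have hmu : mu ≠ 0 := fun h => hre_neg.ne (congrArg Complex.re h)
  refine eq_zero_of_opA_opA_eq hp hsum hlam hre_neg.le hmu hre_neg.le hv hAv ?_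
  rw [opB_three] at hBv
  rw [hsum_roots, hprod_roots, ← sub_eq_zero, ← hBv]
  module

theorem eq_zero_of_opB_four_eq_zero (hp : ∀ k, 0 < p k) (hsum : Summable p) (hγ₁ : 0 < γ₁)
    {v : ℕ → ℂ} (hv : memDA p v) (hAv : memDA p (opA p v)) (hAAv : memDA p (opA p (opA p v)))
    (hBv : opB p γ₁ 4 v = 0) : v = 0 := by
  have hp0 (k : ℕ) : 0 ≤ p k := (hp k).le
  have hγC : (γ₁ : ℂ) ≠ 0 := by exact_mod_cast hγ₁.ne'
  -- `B₄ = (A + γ₁) (A² + γ₁²)`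
  have hAAv_eq : opA p (opA p v) + (γ₁ : ℂ) ^ 2 • v = 0 := by
    refine eq_zero_of_opA_eq_smul (lam := -γ₁) hp hsum (by simpa using hγ₁.ne')
      (by simpa using hγ₁.le) (hAAv.add hp0 (hv.const_smul _)) ?_
    rw [opA_add hp0 hAAv (hv.const_smul _), opA_const_smul, ← sub_eq_zero, ← hBv, opB_four]
    module
  have hiγ : (γ₁ : ℂ) * Complex.I ≠ 0 := mul_ne_zero hγC Complex.I_ne_zero
  refine eq_zero_of_opA_opA_eq (lam := γ₁ * Complex.I) (mu := -(γ₁ * Complex.I)) hp hsum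
    hiγ (by simp) (neg_ne_zero.2 hiγ) (by simp) hv hAv ?_
  have hprod_roots : γ₁ * Complex.I * -(γ₁ * Complex.I) = (γ₁ : ℂ) ^ 2 := by
    linear_combination (-(γ₁ : ℂ) ^ 2) * Complex.I_sq
  rw [add_neg_cancel, hprod_roots, ← sub_eq_zero, ← hAAv_eq]
  module

end

/-- For any probability distribution `p` on `ℕ` with all masses positive, any `γ₁ > 0`
and any `s ∈ {2,3,4}`, the operator `B_s` is injective on `D(A^{s-1}) ⊆ ℂ^ℕ`. -/
theorem injective_opB_s_two_three_four
    (p : ℕ → ℝ) (hp : ∀ k, 0 < p k) (hsum : HasSum p 1)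
    (γ₁ : ℝ) (hγ₁ : 0 < γ₁) (s : ℕ) (hs : s = 2 ∨ s = 3 ∨ s = 4)
    (v : ℕ → ℂ) (hv : memDAiter p (s - 1) v) (hBv : opB p γ₁ s v = 0) :
    v = 0 := by
  rcases hs with rfl | rfl | rfl
  · exact eq_zero_of_opB_two_eq_zero hp hsum.summable hγ₁ (hv 0 (by norm_num)) hBv
  · exact eq_zero_of_opB_three_eq_zero hp hsum.summable hγ₁ (hv 0 (by norm_num))
      (hv 1 (by norm_num)) hBv
  · exact eq_zero_of_opB_four_eq_zero hp hsum.summable hγ₁ (hv 0 (by norm_num))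
      (hv 1 (by norm_num)) (hv 2 (by norm_num)) hBv
end
end

section
/- Let p be the geometric distribution p_k = θ(1−θ)^k with θ ∈ (0,1) satisfying θ < 2·cos(2π/5), let s ≥ 5 be an integer and γ₁ ≥ 1 a real. Set λ = γ₁·exp(2πi/s). Then the sequence x(k) = ((λ − θ)/(λ(1−θ)))^k, k ≥ 0, is a nonzero element of D(A) and satisfies A x = λ x; in particular λ is an eigenvalue of A. -/
open scoped BigOperators

noncomputable section

/-!
For the geometric distribution, `A` maps a power sequence `μ ^ k` to `θ / (1 - (1 - θ) μ) · μ ^ k`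
as soon as the series converges, i.e. `|(1 - θ) μ| < 1`. The choice `μ = (λ - θ) / (λ (1 - θ))`
makes `1 - (1 - θ) μ = θ / λ`, so the eigenvalue is `λ`, and convergence becomes
`|λ - θ| < |λ|`, i.e. `θ < 2 Re λ`. For `λ = γ₁ exp(2πi/s)` with `s ≥ 5` and `γ₁ ≥ 1` we have
`Re λ ≥ cos(2π/5) > θ / 2`.
-/

theorem qtail_geometric {θ : ℝ} (hθ : |1 - θ| < 1) (l : ℕ) :
    qtail (fun k => θ * (1 - θ) ^ k) l = (1 - θ) ^ l := by
  have hθ0 : θ ≠ 0 := by rintro rfl; simp at hθ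
  simp only [qtail, pow_add, ← mul_assoc, tsum_mul_left, tsum_geometric_of_abs_lt_one hθ]
  rw [sub_sub_cancel]
  field_simp

theorem memDA_geometric_pow {θ : ℝ} {μ : ℂ} (h : |1 - θ| * ‖μ‖ < 1) :
    memDA (fun k => θ * (1 - θ) ^ k) (fun k => μ ^ k) := by
  have hr : |(1 - θ) * ‖μ‖| < 1 := by rwa [abs_mul, abs_norm]
  simpa only [memDA, norm_pow, mul_assoc, ← mul_pow] using
    (summable_geometric_of_abs_lt_one hr).mul_left θ

theorem opA_geometric_pow {θ : ℝ} (hθ : |1 - θ| < 1) (hθ1 : θ ≠ 1) {μ : ℂ}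
    (hμ : |1 - θ| * ‖μ‖ < 1) :
    opA (fun k => θ * (1 - θ) ^ k) (fun k => μ ^ k) =
      fun l => θ / (1 - (1 - θ) * μ) * μ ^ l := by
  have hr : ‖(1 - θ : ℂ) * μ‖ < 1 := by
    rwa [norm_mul, ← Complex.ofReal_one, ← Complex.ofReal_sub, Complex.norm_real,
      Real.norm_eq_abs]
  have hθ1' : (1 - θ : ℂ) ≠ 0 := by
    rw [sub_ne_zero, ne_comm]; exact_mod_cast hθ1
  funext l
  have hsum : ∑' k, ((θ * (1 - θ) ^ (l + k) : ℝ) : ℂ) * μ ^ (l + k) =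
      θ * (1 - θ) ^ l * μ ^ l * ∑' k, ((1 - θ) * μ) ^ k := by
    rw [← tsum_mul_left]
    congr 1 with k
    rw [mul_pow]
    push_cast
    ring
  rw [opA, qtail_geometric hθ, hsum, tsum_geometric_of_norm_lt_one hr]
  push_cast
  have h1r : 1 - (1 - θ : ℂ) * μ ≠ 0 :=
    sub_ne_zero.mpr (ne_of_apply_ne norm (by rw [norm_one]; exact hr.ne'))
  field_simp

theorem norm_sub_ofReal_lt_norm {z : ℂ} {t : ℝ} (ht : 0 < t) (h : t < 2 * z.re) :
    ‖z - t‖ < ‖z‖ := by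
  rw [← sq_lt_sq₀ (norm_nonneg _) (norm_nonneg _), Complex.sq_norm, Complex.sq_norm,
    Complex.normSq_apply, Complex.normSq_apply]
  simp only [Complex.sub_re, Complex.sub_im, Complex.ofReal_re, Complex.ofReal_im, sub_zero]
  nlinarith

theorem geometric_pow_eigenvector {θ : ℝ} (hθ : θ ∈ Set.Ioo (0 : ℝ) 1) {z : ℂ}
    (hz : ‖z - θ‖ < ‖z‖) :
    (fun k : ℕ => ((z - θ) / (z * (1 - θ))) ^ k) ≠ 0 ∧
      memDA (fun k => θ * (1 - θ) ^ k) (fun k : ℕ => ((z - θ) / (z * (1 - θ))) ^ k) ∧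
      opA (fun k => θ * (1 - θ) ^ k) (fun k : ℕ => ((z - θ) / (z * (1 - θ))) ^ k) =
        fun l : ℕ => z * ((z - θ) / (z * (1 - θ))) ^ l := by
  obtain ⟨hθ0, hθ1⟩ := hθ
  have hz0 : z ≠ 0 := by rintro rfl; simp at hz; exact (abs_nonneg θ).not_gt hz
  have hθ0' : (θ : ℂ) ≠ 0 := by exact_mod_cast hθ0.ne'
  have hθ1' : (1 - θ : ℂ) ≠ 0 := by
    rw [sub_ne_zero, ne_comm]; exact_mod_cast hθ1.ne
  have habs : |1 - θ| < 1 := by rw [abs_lt]; constructor <;> linarith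
  have hscaled : (1 - θ : ℂ) * ((z - θ) / (z * (1 - θ))) = 1 - θ / z := by
    field_simp
  have hμ : |1 - θ| * ‖(z - θ) / (z * (1 - θ))‖ < 1 := by
    rw [← Real.norm_eq_abs, ← Complex.norm_real, Complex.ofReal_sub, Complex.ofReal_one,
      ← norm_mul, hscaled, one_sub_div hz0, norm_div, div_lt_one (norm_pos_iff.mpr hz0)]
    exact hz
  refine ⟨fun h => by simpa using congrFun h 0, memDA_geometric_pow hμ, ?_⟩
  rw [opA_geometric_pow habs hθ1.ne hμ, hscaled, sub_sub_cancel, div_div_cancel₀ hθ0']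

/-- For the geometric distribution with `θ ∈ (0,1)`, `θ < 2 cos(2π/5)`, `s ≥ 5`,
`γ₁ ≥ 1` and `λ = γ₁ exp(2πi/s)`, the sequence `x(k) = ((λ−θ)/(λ(1−θ)))^k` is a
nonzero element of `D(A)` with `A x = λ x`; hence `λ` is an eigenvalue of `A`. -/
theorem geometric_eigenvector
    (θ : ℝ) (hθ : θ ∈ Set.Ioo (0 : ℝ) 1) (hθ5 : θ < 2 * Real.cos (2 * Real.pi / 5))
    (s : ℕ) (hs : 5 ≤ s) (γ₁ : ℝ) (hγ₁ : 1 ≤ γ₁) :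
    (fun k : ℕ =>
        (((γ₁ : ℂ) * Complex.exp (2 * Real.pi * Complex.I / s) - θ) /
          ((γ₁ : ℂ) * Complex.exp (2 * Real.pi * Complex.I / s) * (1 - θ))) ^ k) ≠ 0 ∧
      memDA (fun k => θ * (1 - θ) ^ k)
        (fun k : ℕ =>
          (((γ₁ : ℂ) * Complex.exp (2 * Real.pi * Complex.I / s) - θ) /
            ((γ₁ : ℂ) * Complex.exp (2 * Real.pi * Complex.I / s) * (1 - θ))) ^ k) ∧
      opA (fun k => θ * (1 - θ) ^ k)
          (fun k : ℕ =>
            (((γ₁ : ℂ) * Complex.exp (2 * Real.pi * Complex.I / s) - θ) /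
              ((γ₁ : ℂ) * Complex.exp (2 * Real.pi * Complex.I / s) * (1 - θ))) ^ k) =
        fun l : ℕ =>
          (γ₁ : ℂ) * Complex.exp (2 * Real.pi * Complex.I / s) *
            (((γ₁ : ℂ) * Complex.exp (2 * Real.pi * Complex.I / s) - θ) /
              ((γ₁ : ℂ) * Complex.exp (2 * Real.pi * Complex.I / s) * (1 - θ))) ^ l := by
  refine geometric_pow_eigenvector hθ (norm_sub_ofReal_lt_norm hθ.1 ?_)
  have hs5 : (5 : ℝ) ≤ s := by exact_mod_cast hs
  have harg : 2 * Real.pi * Complex.I / s = ((2 * Real.pi / s : ℝ) : ℂ) * Complex.I := by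
    push_cast
    ring
  have hre : ((γ₁ : ℂ) * Complex.exp (2 * Real.pi * Complex.I / s)).re =
      γ₁ * Real.cos (2 * Real.pi / s) := by
    rw [harg, Complex.re_ofReal_mul, Complex.exp_ofReal_mul_I_re]
  have hcos : Real.cos (2 * Real.pi / 5) ≤ Real.cos (2 * Real.pi / s) :=
    Real.cos_le_cos_of_nonneg_of_le_pi (by positivity) (by linarith [Real.pi_pos]) (by gcongr)
  have hcos_nonneg : 0 ≤ Real.cos (2 * Real.pi / s) := by linarith [hθ.1]
  calc θ < 2 * Real.cos (2 * Real.pi / 5) := hθ5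
    _ ≤ 2 * Real.cos (2 * Real.pi / s) := by gcongr
    _ ≤ 2 * (γ₁ * Real.cos (2 * Real.pi / s)) := by
      gcongr
      exact le_mul_of_one_le_left hcos_nonneg hγ₁
    _ = 2 * ((γ₁ : ℂ) * Complex.exp (2 * Real.pi * Complex.I / s)).re := by rw [hre]
end
end

section
/- Let N ≥ 1 be a finite integer and let p = (p_0,…,p_N) be a probability distribution on {0,1,…,N} with p_k > 0 for all k ≤ N; let A be the corresponding (N+1)×(N+1) upper-triangular operator. Let s ≥ 1 and suppose (A^s id)(l) = β₀ + β₁ l for all l ∈ {0,…,N}, with β₁ > 0. Let γ₁ = β₁^{1/s} (the positive real s-th root) and γ₀ = β₀ / (Σ_{k=0}^{s−1} γ₁^k). Then (A id)(l) = γ₀ + γ₁ l for all l ∈ {0,…,N}. -/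
open scoped BigOperators

noncomputable section

/-- Tail sum `q_l = Σ_{k=l}^N p_k` for a distribution on `{0,…,N}` (indexed by `Fin (N+1)`). -/
def qtailFin {N : ℕ} (p : Fin (N + 1) → ℝ) (l : Fin (N + 1)) : ℝ :=
  ∑ k ∈ Finset.univ.filter (fun k => l ≤ k), p k

/-- The operator `A` on `ℝ^{N+1}`: `(A v)(l) = (1/q_l) Σ_{k=l}^N p_k v(k)`. -/
def opAFin {N : ℕ} (p : Fin (N + 1) → ℝ) (v : Fin (N + 1) → ℝ) : Fin (N + 1) → ℝ :=
  fun l => (1 / qtailFin p l) * ∑ k ∈ Finset.univ.filter (fun k => l ≤ k), p k * v k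

/-! The last state is absorbing for `A`, so the hypothesis at `l = N` forces `β₀ = N (1 - β₁)`:
`(A^s id)(l) = N + γ^s (l - N)`. Row `l` of `A` is the convex combination
`(A w)(l) = ρ w(l) + (1 - ρ) (A w)(l+1)` with `ρ = p_l / q_l`. Going down from `l = N`, suppose
`(A^j id)(l+1) = N + γ^j (l+1-N)` for every `j`; then the defect `x_j = (A^j id)(l) - N - γ^j (l-N)`
satisfies `x_0 = 0` and `x_{j+1} = ρ x_j + γ^j c` for a constant `c`. For `j ≥ 1` such a sequence
has the strict sign of `c`, so `x_s = 0` forces `c = 0` and then `x ≡ 0`. Taking `j = 1` at the end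
gives the claim, since `N (1 - γ^s) = N (1 - γ) Σ_{k<s} γ^k`. -/

section RecurrenceSign

variable {ρ γ c : ℝ} {x : ℕ → ℝ}

lemma pos_succ_of_recurrence (hρ : 0 ≤ ρ) (hγ : 0 < γ) (hc : 0 < c)
    (hrec : ∀ j, x (j + 1) = ρ * x j + γ ^ j * c) (h0 : x 0 = 0) (j : ℕ) : 0 < x (j + 1) := by
  have hnonneg : ∀ j, 0 ≤ x j := by
    intro j
    induction j with
    | zero => exact h0.ge
    | succ j ih => rw [hrec]; positivity
  rw [hrec]
  have := hnonneg j
  positivity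

lemma eq_zero_of_recurrence (hρ : 0 ≤ ρ) (hγ : 0 < γ)
    (hrec : ∀ j, x (j + 1) = ρ * x j + γ ^ j * c) (h0 : x 0 = 0) {s : ℕ} (hs : s ≠ 0)
    (hxs : x s = 0) (j : ℕ) : x j = 0 := by
  obtain ⟨t, rfl⟩ := Nat.exists_eq_succ_of_ne_zero hs
  have hc : c = 0 := by
    rcases lt_trichotomy c 0 with hc | hc | hc
    · have hneg : ∀ j, -x (j + 1) = ρ * -x j + γ ^ j * -c := fun j => by rw [hrec]; ring
      have := pos_succ_of_recurrence (x := fun j => -x j) hρ hγ (neg_pos.mpr hc) hneg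
        (by rw [h0, neg_zero]) t
      linarith
    · exact hc
    · linarith [pos_succ_of_recurrence hρ hγ hc hrec h0 t]
  induction j with
  | zero => exact h0
  | succ j ih => rw [hrec, ih, hc]; ring

end RecurrenceSign

namespace RecordOperator

variable {N : ℕ} {p : Fin (N + 1) → ℝ}

lemma filter_last_le :
    Finset.univ.filter (fun k : Fin (N + 1) => Fin.last N ≤ k) = {Fin.last N} := by
  ext k
  simp [Fin.last_le_iff]

lemma filter_castSucc_le (i : Fin N) :
    Finset.univ.filter (fun k => i.castSucc ≤ k) =
      insert i.castSucc (Finset.univ.filter (fun k => i.succ ≤ k)) := by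
  ext k
  simp [le_iff_eq_or_lt, Fin.castSucc_lt_iff_succ_le, eq_comm]

lemma castSucc_notMem_filter_succ_le (i : Fin N) :
    i.castSucc ∉ Finset.univ.filter (fun k => i.succ ≤ k) := by
  simp

lemma qtailFin_pos (hp : ∀ k, 0 < p k) (l : Fin (N + 1)) : 0 < qtailFin p l :=
  Finset.sum_pos (fun k _ => hp k) ⟨l, by simp⟩

lemma qtailFin_castSucc (i : Fin N) :
    qtailFin p i.castSucc = p i.castSucc + qtailFin p i.succ := by
  rw [qtailFin, filter_castSucc_le, Finset.sum_insert (castSucc_notMem_filter_succ_le i), qtailFin]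

lemma opAFin_last (hp : ∀ k, 0 < p k) (w : Fin (N + 1) → ℝ) :
    opAFin p w (Fin.last N) = w (Fin.last N) := by
  simp only [opAFin, qtailFin, filter_last_le, Finset.sum_singleton]
  field_simp [(hp _).ne']

lemma iterate_opAFin_last (hp : ∀ k, 0 < p k) (w : Fin (N + 1) → ℝ) (j : ℕ) :
    (opAFin p)^[j] w (Fin.last N) = w (Fin.last N) := by
  induction j with
  | zero => rfl
  | succ j ih => rw [Function.iterate_succ_apply', opAFin_last hp, ih]

lemma opAFin_castSucc (hp : ∀ k, 0 < p k) (w : Fin (N + 1) → ℝ) (i : Fin N) :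
    opAFin p w i.castSucc = p i.castSucc / qtailFin p i.castSucc * w i.castSucc +
      (1 - p i.castSucc / qtailFin p i.castSucc) * opAFin p w i.succ := by
  have hq := (qtailFin_pos hp i.castSucc).ne'
  have hq' := (qtailFin_pos hp i.succ).ne'
  have hsplit := qtailFin_castSucc (p := p) i
  simp only [opAFin]
  rw [filter_castSucc_le, Finset.sum_insert (castSucc_notMem_filter_succ_le i)]
  field_simp
  rw [hsplit]
  ring

lemma iterate_opAFin_id (hp : ∀ k, 0 < p k) {γ : ℝ} (hγ : 0 < γ) {s : ℕ} (hs : s ≠ 0)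
    (hlin : ∀ l : Fin (N + 1),
      (opAFin p)^[s] (fun k => ((k : ℕ) : ℝ)) l = N + γ ^ s * ((l : ℕ) - N))
    (l : Fin (N + 1)) (j : ℕ) :
    (opAFin p)^[j] (fun k => ((k : ℕ) : ℝ)) l = N + γ ^ j * ((l : ℕ) - N) := by
  induction l using Fin.reverseInduction generalizing j with
  | last => simp [iterate_opAFin_last hp]
  | cast i ih =>
    set ρ := p i.castSucc / qtailFin p i.castSucc
    have hρ : 0 ≤ ρ := div_nonneg (hp _).le (qtailFin_pos hp _).le
    set v := fun j => (opAFin p)^[j] (fun k => ((k : ℕ) : ℝ))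
    have hrec : ∀ j, v (j + 1) i.castSucc - (N + γ ^ (j + 1) * ((i : ℕ) - N)) =
        ρ * (v j i.castSucc - (N + γ ^ j * ((i : ℕ) - N))) +
          γ ^ j * (ρ * ((i : ℕ) - N) + (1 - ρ) * γ * ((i : ℕ) + 1 - N) - γ * ((i : ℕ) - N)) := by
      intro j
      have hstep : v (j + 1) = opAFin p (v j) := Function.iterate_succ_apply' _ _ _
      rw [hstep, opAFin_castSucc hp, ← hstep, show v (j + 1) i.succ = _ from ih (j + 1)]
      simp only [Fin.val_succ, Nat.cast_add, Nat.cast_one]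
      ring
    exact sub_eq_zero.mp (eq_zero_of_recurrence
      (x := fun j => v j i.castSucc - (N + γ ^ j * ((i : ℕ) - N))) hρ hγ hrec (by simp [v]) hs
      (sub_eq_zero.mpr (hlin _)) j)

end RecordOperator

theorem adjacent_linearity_of_nonadjacent_finite_general
    (N : ℕ) (p : Fin (N + 1) → ℝ)
    (hp : ∀ k, 0 < p k)
    (s : ℕ) (hs : 1 ≤ s) (β₀ β₁ : ℝ) (hβ₁ : 0 < β₁)
    (hlin : ∀ l : Fin (N + 1),
      ((opAFin p)^[s] (fun k => ((k : ℕ) : ℝ))) l = β₀ + β₁ * (l : ℕ)) :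
    ∀ l : Fin (N + 1), opAFin p (fun k => ((k : ℕ) : ℝ)) l =
      β₀ / (∑ k ∈ Finset.range s, (β₁ ^ ((1 : ℝ) / s)) ^ k) +
        β₁ ^ ((1 : ℝ) / s) * (l : ℕ) := by
  set γ := β₁ ^ ((1 : ℝ) / s) with hγdef
  have hs0 : s ≠ 0 := by omega
  have hγ : 0 < γ := Real.rpow_pos_of_pos hβ₁ _
  have hγs : γ ^ s = β₁ := by rw [hγdef, one_div, Real.rpow_inv_natCast_pow hβ₁.le hs0]
  have hβ₀ : β₀ = N * (1 - β₁) := by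
    have h := hlin (Fin.last N)
    rw [RecordOperator.iterate_opAFin_last hp, Fin.val_last] at h
    linarith
  have hγ₀ : β₀ / ∑ k ∈ Finset.range s, γ ^ k = N * (1 - γ) := by
    rw [hβ₀, ← hγs, ← mul_neg_geom_sum, div_eq_iff (geom_sum_pos hγ.le hs0).ne']
    ring
  have hA := RecordOperator.iterate_opAFin_id hp hγ hs0
    (fun l => by rw [hlin, hβ₀, hγs]; ring)
  intro l
  rw [hγ₀, ← Function.iterate_one (opAFin p), hA l 1]
  ring

/-- Finite support case: if `(A^s id)(l) = β₀ + β₁ l` on `{0,…,N}` with `β₁ > 0`, then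
`(A id)(l) = γ₀ + γ₁ l` with `γ₁ = β₁^{1/s}` and `γ₀ = β₀ / Σ_{k=0}^{s−1} γ₁^k`. -/
theorem adjacent_linearity_of_nonadjacent_finite
    (N : ℕ) (hN : 1 ≤ N) (p : Fin (N + 1) → ℝ)
    (hp : ∀ k, 0 < p k) (hsum : ∑ k, p k = 1)
    (s : ℕ) (hs : 1 ≤ s) (β₀ β₁ : ℝ) (hβ₁ : 0 < β₁)
    (hlin : ∀ l : Fin (N + 1),
      ((opAFin p)^[s] (fun k => ((k : ℕ) : ℝ))) l = β₀ + β₁ * (l : ℕ)) :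
    ∀ l : Fin (N + 1), opAFin p (fun k => ((k : ℕ) : ℝ)) l =
      β₀ / (∑ k ∈ Finset.range s, (β₁ ^ ((1 : ℝ) / s)) ^ k) +
        β₁ ^ ((1 : ℝ) / s) * (l : ℕ) :=
  adjacent_linearity_of_nonadjacent_finite_general N p hp s hs β₀ β₁ hβ₁ hlin
end
end
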